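/- arXiv:2504.18011 — 7 statements merged into one kernel-verified Lean document; each statement's English description precedes it below -/
import Mathlib

section
/- Let (X,G) be a dynamical system, i.e., a countable discrete group G acting by homeomorphisms on a compact Hausdorff space X (a continuous action). Let H be an almost normal subgroup of G such that the set X_H = {x ∈ X : G_x = gHg⁻¹ for some g ∈ G} is nonempty. Then for every x in the topological closure of X_H there exists g ∈ G such that gHg⁻¹ ⊆ G_x. -/
/-- The conjugate subgroup `g H g⁻¹`. -/
def conjSubgroup {G : Type*} [Group G] (g : G) (H : Subgroup G) : Subgroup G :=
  Subgroup.map (MulAut.conj g).toMonoidHom H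

/-- The set `X_H` of points of `X` whose stabilizer is conjugate to `H`. -/
def setXH (G : Type*) {X : Type*} [Group G] [MulAction G X] (H : Subgroup G) : Set X :=
  {x : X | ∃ g : G, MulAction.stabilizer G x = conjSubgroup g H}

/-!
Since `H` is almost normal it has only finitely many conjugates, and in a Hausdorff space the
points fixed by a given subgroup form a closed set. Hence the points whose stabilizer contains
some conjugate of `H` form a finite union of closed sets, which is closed and contains `X_H`,
so it also contains the closure of `X_H`.
-/

open MulAction

section Conjugates

variable {G : Type*} [Group G]

lemma conjSubgroup_mul (a b : G) (H : Subgroup G) :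
    conjSubgroup (a * b) H = conjSubgroup a (conjSubgroup b H) := by
  simp only [conjSubgroup, Subgroup.map_map, map_mul]
  rfl

lemma conjSubgroup_eq_self_of_mem_normalizer {n : G} {H : Subgroup G}
    (hn : n ∈ Subgroup.normalizer (H : Set G)) : conjSubgroup n H = H := by
  ext a
  simp only [conjSubgroup, Subgroup.mem_map, MulEquiv.coe_toMonoidHom, MulAut.conj_apply]
  constructor
  · rintro ⟨y, hy, rfl⟩
    exact (Subgroup.mem_normalizer_iff.mp hn y).mp hy
  · intro ha
    refine ⟨n⁻¹ * a * n, (Subgroup.mem_normalizer_iff.mp hn _).mpr ?_, by group⟩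
    rwa [show n * (n⁻¹ * a * n) * n⁻¹ = a by group]

lemma conjSubgroup_mul_of_mem_normalizer (g : G) {n : G} {H : Subgroup G}
    (hn : n ∈ Subgroup.normalizer (H : Set G)) : conjSubgroup (g * n) H = conjSubgroup g H := by
  rw [conjSubgroup_mul, conjSubgroup_eq_self_of_mem_normalizer hn]

lemma finite_range_conjSubgroup {H : Subgroup G}
    (hH : (Subgroup.normalizer (H : Set G)).FiniteIndex) :
    (Set.range (conjSubgroup · H)).Finite := by
  have : Finite (G ⧸ Subgroup.normalizer (H : Set G)) := Subgroup.finite_quotient_of_finiteIndex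
  rw [← Set.range_quotient_lift (s := QuotientGroup.leftRel (Subgroup.normalizer (H : Set G)))
    (f := (conjSubgroup · H))]
  · exact Set.finite_range _
  · intro a b hab
    rw [← mul_inv_cancel_left a b,
      conjSubgroup_mul_of_mem_normalizer a (QuotientGroup.leftRel_apply.mp hab)]

end Conjugates

section Topology

variable {G X : Type*} [Group G] [TopologicalSpace X] [T2Space X]
  [MulAction G X] [ContinuousConstSMul G X]

lemma isClosed_setOf_le_stabilizer (K : Subgroup G) :
    IsClosed {x : X | K ≤ stabilizer G x} := by
  have : {x : X | K ≤ stabilizer G x} = ⋂ k : K, {x | (k : G) • x = x} := by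
    ext x
    simp [SetLike.le_def]
  rw [this]
  exact isClosed_iInter fun k => isClosed_eq (continuous_const_smul _) continuous_id

lemma isClosed_setOf_exists_conjSubgroup_le_stabilizer {H : Subgroup G}
    (hH : (Subgroup.normalizer (H : Set G)).FiniteIndex) :
    IsClosed {x : X | ∃ g : G, conjSubgroup g H ≤ stabilizer G x} := by
  rw [Set.ofPred_exists, ← Set.biUnion_range (f := (conjSubgroup · H))
    (g := fun K => {x : X | K ≤ stabilizer G x})]
  exact (finite_range_conjSubgroup hH).isClosed_biUnion fun K _ => isClosed_setOf_le_stabilizer K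

end Topology

theorem stmt1_general {G X : Type*} [Group G]
    [TopologicalSpace X] [T2Space X]
    [MulAction G X] [ContinuousConstSMul G X]
    (H : Subgroup G) (hAN : (Subgroup.normalizer (H : Set G)).FiniteIndex) :
    ∀ x ∈ closure (setXH G H : Set X),
      ∃ g : G, conjSubgroup g H ≤ MulAction.stabilizer G x := by
  intro x hx
  refine closure_minimal ?_ (isClosed_setOf_exists_conjSubgroup_le_stabilizer hAN) hx
  rintro y ⟨g, hg⟩
  exact ⟨g, hg.ge⟩

/-- Let `(X,G)` be a dynamical system (a countable discrete group acting by homeomorphisms on a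
compact Hausdorff space) and let `H` be an almost normal subgroup of `G` such that `X_H ≠ ∅`.
Then every point in the closure of `X_H` has stabilizer containing some conjugate of `H`. -/
theorem stmt1 {G X : Type*} [Group G] [Countable G]
    [TopologicalSpace X] [CompactSpace X] [T2Space X]
    [MulAction G X] [ContinuousConstSMul G X]
    (H : Subgroup G) (hAN : (Subgroup.normalizer (H : Set G)).FiniteIndex)
    (hne : (setXH G H : Set X).Nonempty) :
    ∀ x ∈ closure (setXH G H : Set X),
      ∃ g : G, conjSubgroup g H ≤ MulAction.stabilizer G x :=
  stmt1_general H hAN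
end

section
/- Let (X,G) be a dynamical system and H an almost normal subgroup of G. Let x ∈ X be such that the closure of the orbit O(x) = {g•x : g ∈ G} intersects X_H = {z ∈ X : G_z = gHg⁻¹ for some g ∈ G}. Then for any g, l ∈ G, if gHg⁻¹ ⊆ G_x and lHl⁻¹ ⊆ G_x, then gHg⁻¹ = lHl⁻¹. -/
/-
Almost normality makes conjugates of `H` rigid: if `H ≤ cHc⁻¹`, some power `cⁿ` (`n > 0`) lies in
the finite-index normalizer of `H`, so the increasing chain `H ≤ cHc⁻¹ ≤ ⋯ ≤ cⁿHc⁻ⁿ = H` collapses.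
The finite-index subgroup `N` normalizing both `gHg⁻¹` and `lHl⁻¹` conjugates them to themselves,
so both fix every point of the `N`-orbit of `x`, hence of its closure. The `G`-orbit of `x` is a
finite union of translates of the `N`-orbit, so a translate `a • y` of the point `y ∈ X_H` of the
orbit closure lies in that closure; thus `gHg⁻¹` and `lHl⁻¹` both lie in the conjugate
`G_{a • y}` of `H`, and rigidity makes both equal to it.
-/

open Pointwise MulAction ConjAct

theorem conjSubgroup_eq_toConjAct_smul {G : Type*} [Group G] (g : G) (H : Subgroup G) :
    conjSubgroup g H = toConjAct g • H :=
  rfl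

theorem MulAction.stabilizer_smul_eq_toConjAct_smul {G X : Type*} [Group G] [MulAction G X]
    (g : G) (x : X) : stabilizer G (g • x) = toConjAct g • stabilizer G x :=
  stabilizer_smul_eq_stabilizer_map_conj g x

namespace Subgroup

variable {G : Type*} [Group G]

theorem smul_eq_self_of_le_smul {α : Type*} [Group α] [MulDistribMulAction α G]
    {H : Subgroup G} {c : α} {n : ℕ} (hn : 0 < n) (hcn : c ^ n • H = H) (h : H ≤ c • H) :
    c • H = H := by
  have hmono : Monotone fun m : ℕ => c ^ m • H := by
    refine monotone_nat_of_le_succ fun m => ?_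
    simpa only [pow_succ, mul_smul] using pointwise_smul_le_pointwise_smul_iff.mpr h
  refine le_antisymm ?_ h
  simpa only [pow_one, hcn] using hmono (Nat.one_le_of_lt hn)

variable {H : Subgroup G} [(normalizer (H : Set G)).FiniteIndex]

theorem toConjAct_smul_eq_self_of_le_smul {g : G} (h : H ≤ toConjAct g • H) :
    toConjAct g • H = H := by
  obtain ⟨n, hn, -, hgn⟩ :=
    exists_pow_mem_of_index_ne_zero (H := normalizer (H : Set G)) FiniteIndex.index_ne_zero g
  refine smul_eq_self_of_le_smul hn ?_ h
  rw [← map_pow]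
  exact conjAct_pointwise_smul_eq_self hgn

theorem toConjAct_smul_eq_of_le {a b : G} (h : toConjAct a • H ≤ toConjAct b • H) :
    toConjAct a • H = toConjAct b • H := by
  have hH : H ≤ toConjAct (a⁻¹ * b) • H := by
    have := (pointwise_smul_le_pointwise_smul_iff (a := (toConjAct a)⁻¹)).mpr h
    rwa [inv_smul_smul, smul_smul, ← map_inv, ← map_mul] at this
  calc toConjAct a • H = toConjAct a • toConjAct (a⁻¹ * b) • H := by
        rw [toConjAct_smul_eq_self_of_le_smul hH]
    _ = toConjAct b • H := by rw [smul_smul, ← map_mul, mul_inv_cancel_left]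

variable (H) in
instance finiteIndex_normalizer_toConjAct_smul (g : G) :
    (normalizer ((toConjAct g • H : Subgroup G) : Set G)).FiniteIndex := by
  change (normalizer ((H.map (MulAut.conj g).toMonoidHom : Subgroup G) : Set G)).FiniteIndex
  rw [← map_equiv_normalizer_eq]
  exact ⟨(index_map_equiv _ (MulAut.conj g)).trans_ne FiniteIndex.index_ne_zero⟩

end Subgroup

theorem MulAction.le_stabilizer_of_mem_orbit {G X : Type*} [Group G] [MulAction G X]
    {K N : Subgroup G} (hN : N ≤ Subgroup.normalizer (K : Set G)) {x : X}
    (hx : K ≤ stabilizer G x) : ∀ z ∈ orbit N x, K ≤ stabilizer G z := by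
  rintro _ ⟨n, rfl⟩
  calc K = toConjAct (n : G) • K := (Subgroup.conjAct_pointwise_smul_eq_self (hN n.2)).symm
    _ ≤ toConjAct (n : G) • stabilizer G x := Subgroup.pointwise_smul_le_pointwise_smul_iff.mpr hx
    _ = stabilizer G (n • x) := (stabilizer_smul_eq_toConjAct_smul (n : G) x).symm

section Topology

variable {G X : Type*} [Group G] [TopologicalSpace X] [MulAction G X] [ContinuousConstSMul G X]

theorem MulAction.le_stabilizer_of_mem_closure [T2Space X] {K : Subgroup G} {s : Set X}
    (hs : ∀ z ∈ s, K ≤ stabilizer G z) {y : X} (hy : y ∈ closure s) : K ≤ stabilizer G y :=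
  fun k hk => closure_minimal (fun z hz => hs z hz hk)
    (isClosed_eq (continuous_const_smul k) continuous_id) hy

theorem MulAction.exists_smul_mem_closure_orbit_subgroup (N : Subgroup G) [N.FiniteIndex]
    {x y : X} (hy : y ∈ closure (orbit G x)) : ∃ a : G, a • y ∈ closure (orbit N x) := by
  have : Finite (G ⧸ N) := Subgroup.finite_quotient_of_finiteIndex
  have horbit : orbit G x ⊆ ⋃ q : G ⧸ N, q.out • orbit N x := by
    rintro _ ⟨b, rfl⟩
    obtain ⟨n, hn⟩ := QuotientGroup.mk_out_eq_mul N b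
    refine Set.mem_iUnion.mpr ⟨b, Set.mem_smul_set_iff_inv_smul_mem.mpr ⟨n⁻¹, ?_⟩⟩
    simp [hn, smul_smul, Subgroup.smul_def]
  have hy' := closure_mono horbit hy
  rw [closure_iUnion_of_finite] at hy'
  obtain ⟨q, hq⟩ := Set.mem_iUnion.mp hy'
  rw [closure_smul, Set.mem_smul_set_iff_inv_smul_mem] at hq
  exact ⟨_, hq⟩

end Topology

theorem stmt2_general {G X : Type*} [Group G]
    [TopologicalSpace X] [T2Space X]
    [MulAction G X] [ContinuousConstSMul G X]
    (H : Subgroup G) (hAN : (Subgroup.normalizer (H : Set G)).FiniteIndex)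
    (x : X) (hx : (closure (MulAction.orbit G x) ∩ setXH G H).Nonempty)
    (g l : G)
    (hg : conjSubgroup g H ≤ MulAction.stabilizer G x)
    (hl : conjSubgroup l H ≤ MulAction.stabilizer G x) :
    conjSubgroup g H = conjSubgroup l H := by
  obtain ⟨y, hy, k, hyk⟩ := hx
  simp only [conjSubgroup_eq_toConjAct_smul] at hg hl hyk ⊢
  let N := Subgroup.normalizer ((toConjAct g • H : Subgroup G) : Set G) ⊓
    Subgroup.normalizer ((toConjAct l • H : Subgroup G) : Set G)
  obtain ⟨a, ha⟩ := exists_smul_mem_closure_orbit_subgroup N hy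
  have hstab : stabilizer G (a • y) = toConjAct (a * k) • H := by
    rw [stabilizer_smul_eq_toConjAct_smul, hyk, smul_smul, map_mul]
  have hgy := le_stabilizer_of_mem_closure (le_stabilizer_of_mem_orbit inf_le_left hg) ha
  have hly := le_stabilizer_of_mem_closure (le_stabilizer_of_mem_orbit inf_le_right hl) ha
  rw [hstab] at hgy hly
  exact (Subgroup.toConjAct_smul_eq_of_le hgy).trans (Subgroup.toConjAct_smul_eq_of_le hly).symm

/-- Let `(X,G)` be a dynamical system, `H` an almost normal subgroup of `G`, and `x ∈ X` a point
whose orbit closure meets `X_H`. If `g H g⁻¹ ⊆ G_x` and `l H l⁻¹ ⊆ G_x`,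
then `g H g⁻¹ = l H l⁻¹`. -/
theorem stmt2 {G X : Type*} [Group G] [Countable G]
    [TopologicalSpace X] [CompactSpace X] [T2Space X]
    [MulAction G X] [ContinuousConstSMul G X]
    (H : Subgroup G) (hAN : (Subgroup.normalizer (H : Set G)).FiniteIndex)
    (x : X) (hx : (closure (MulAction.orbit G x) ∩ setXH G H).Nonempty)
    (g l : G)
    (hg : conjSubgroup g H ≤ MulAction.stabilizer G x)
    (hl : conjSubgroup l H ≤ MulAction.stabilizer G x) :
    conjSubgroup g H = conjSubgroup l H :=
  stmt2_general H hAN x hx g l hg hl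
end

section
/- Let (X,G) be a minimal topologically free dynamical system and let H be a finite almost normal subgroup of G. Then for every x ∈ X and every g ∈ G, the intersection G_x ∩ gHg⁻¹ is the trivial group {1}. -/
open MulAction Pointwise

section Conjugates

variable {G : Type*} [Group G] {H : Subgroup G}

theorem mem_conjugatesOfSet_of_mem_conjSubgroup {g s : G} (hs : s ∈ conjSubgroup g H) :
    s ∈ Group.conjugatesOfSet (H : Set G) := by
  obtain ⟨a, ha, rfl⟩ := Subgroup.mem_map.mp hs
  exact Group.mem_conjugatesOfSet_iff.mpr ⟨a, ha, isConj_iff.mpr ⟨g, rfl⟩⟩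

theorem finite_orbit_conjAct_of_finiteIndex_normalizer
    (hAN : (Subgroup.normalizer (H : Set G)).FiniteIndex) :
    (orbit (ConjAct G) H).Finite := by
  have hstab : (stabilizer (ConjAct G) H).comap (ConjAct.toConjAct : G ≃* ConjAct G).toMonoidHom =
      Subgroup.normalizer (H : Set G) := by
    ext g
    exact Subgroup.conjAct_pointwise_smul_iff
  refine Set.finite_of_ncard_ne_zero ?_
  rw [← index_stabilizer, ← Subgroup.index_comap_of_surjective (H := stabilizer (ConjAct G) H)
    (f := (ConjAct.toConjAct : G ≃* ConjAct G).toMonoidHom) ConjAct.toConjAct.surjective, hstab]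
  exact hAN.index_ne_zero

theorem finite_conjugatesOfSet (hfin : (H : Set G).Finite)
    (hAN : (Subgroup.normalizer (H : Set G)).FiniteIndex) :
    (Group.conjugatesOfSet (H : Set G)).Finite := by
  refine ((finite_orbit_conjAct_of_finiteIndex_normalizer hAN).biUnion
    (t := fun K : Subgroup G => (K : Set G)) ?_).subset ?_
  · rintro _ ⟨c, rfl⟩
    simpa [Subgroup.coe_pointwise_smul] using hfin.smul_set (a := c)
  · intro s hs
    obtain ⟨a, ha, hconj⟩ := Group.mem_conjugatesOfSet_iff.mp hs
    obtain ⟨c, rfl⟩ := isConj_iff.mp hconj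
    exact Set.mem_biUnion (mem_orbit H (ConjAct.toConjAct c))
      (Subgroup.smul_mem_pointwise_smul _ _ _ ha)

end Conjugates

section Dynamics

variable {G X : Type*} [Group G] [TopologicalSpace X] [MulAction G X]

theorem dense_compl_biUnion_fixedBy [BaireSpace X]
    (hfree : {x : X | stabilizer G x = ⊥} ∈ residual X) {S : Set G} (h1 : (1 : G) ∉ S) :
    Dense (⋃ s ∈ S, fixedBy X s)ᶜ := by
  refine dense_of_mem_residual (Filter.mem_of_superset hfree fun y hy hyF => ?_)
  obtain ⟨s, hsS, hsy⟩ := Set.mem_iUnion₂.mp hyF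
  have hs : s ∈ stabilizer G y := hsy
  rw [Set.mem_ofPred_eq.mp hy, Subgroup.mem_bot] at hs
  exact h1 (hs ▸ hsS)

theorem isClosed_biUnion_fixedBy [T2Space X] [ContinuousConstSMul G X] {S : Set G}
    (hS : S.Finite) : IsClosed (⋃ s ∈ S, fixedBy X s) :=
  hS.isClosed_biUnion fun s _ => isClosed_fixedPoints (continuous_const_smul s)

omit [TopologicalSpace X] in
theorem smul_biUnion_fixedBy_subset {S : Set G} (hconj : ∀ k : G, ∀ s ∈ S, k * s * k⁻¹ ∈ S)
    (k : G) : k • ⋃ s ∈ S, fixedBy X s ⊆ ⋃ s ∈ S, fixedBy X s := by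
  rw [Set.smul_set_iUnion₂]
  exact Set.iUnion₂_subset fun s hs =>
    (smul_fixedBy X s k).subset.trans (Set.subset_biUnion_of_mem (hconj k s hs))

theorem notMem_stabilizer_of_finite_of_conj_mem [T2Space X] [BaireSpace X]
    [ContinuousConstSMul G X] [IsMinimal G X]
    (hfree : {x : X | stabilizer G x = ⊥} ∈ residual X) {S : Set G} (hS : S.Finite)
    (hconj : ∀ k : G, ∀ s ∈ S, k * s * k⁻¹ ∈ S) {s : G} (hsS : s ∈ S) (hs1 : s ≠ 1) (x : X) :
    s ∉ stabilizer G x := by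
  intro hsx
  have hconj' : ∀ k : G, ∀ t ∈ S \ {1}, k * t * k⁻¹ ∈ S \ {1} := fun k t ⟨htS, ht1⟩ =>
    ⟨hconj k t htS, fun h => ht1 (conj_eq_one_iff.mp h)⟩
  set F := ⋃ t ∈ S \ {1}, fixedBy X t
  have hxF : x ∈ F := Set.mem_biUnion ⟨hsS, hs1⟩ hsx
  have hdense : Dense Fᶜ := dense_compl_biUnion_fixedBy hfree fun h => h.2 rfl
  have hclosed : IsClosed F := isClosed_biUnion_fixedBy hS.sdiff
  have hinv : ∀ k : G, k • F ⊆ F := smul_biUnion_fixedBy_subset hconj'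
  rcases eq_empty_or_univ_of_smul_invariant_closed G hclosed hinv with hF | hF
  · exact Set.notMem_empty x (hF ▸ hxF)
  · exact (hdense.nonempty_iff.mpr ⟨x⟩).ne_empty (by rw [hF, Set.compl_univ])

end Dynamics

theorem stmt12_general {G X : Type*} [Group G]
    [TopologicalSpace X] [CompactSpace X] [T2Space X]
    [MulAction G X] [ContinuousConstSMul G X]
    (hmin : ∀ x : X, Dense (MulAction.orbit G x))
    (htopfree : {x : X | MulAction.stabilizer G x = ⊥} ∈ residual X)
    (H : Subgroup G) (hfin : (H : Set G).Finite) (hAN : (Subgroup.normalizer (H : Set G)).FiniteIndex) :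
    ∀ (x : X) (g : G), MulAction.stabilizer G x ⊓ conjSubgroup g H = ⊥ := by
  intro x g
  have : IsMinimal G X := ⟨hmin⟩
  refine eq_bot_iff.mpr fun s ⟨hsx, hsg⟩ => Subgroup.mem_bot.mpr ?_
  by_contra hs1
  exact notMem_stabilizer_of_finite_of_conj_mem htopfree (finite_conjugatesOfSet hfin hAN)
    (fun _ _ => Group.conj_mem_conjugatesOfSet) (mem_conjugatesOfSet_of_mem_conjSubgroup hsg)
    hs1 x hsx

/-- If `(X,G)` is a minimal topologically free dynamical system and `H` is a finite almost normal
subgroup of `G`, then `G_x ∩ g H g⁻¹ = {1}` for every `x ∈ X` and `g ∈ G`. -/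
theorem stmt12 {G X : Type*} [Group G] [Countable G]
    [TopologicalSpace X] [CompactSpace X] [T2Space X]
    [MulAction G X] [ContinuousConstSMul G X]
    (hmin : ∀ x : X, Dense (MulAction.orbit G x))
    (htopfree : {x : X | MulAction.stabilizer G x = ⊥} ∈ residual X)
    (H : Subgroup G) (hfin : (H : Set G).Finite) (hAN : (Subgroup.normalizer (H : Set G)).FiniteIndex) :
    ∀ (x : X) (g : G), MulAction.stabilizer G x ⊓ conjSubgroup g H = ⊥ :=
  stmt12_general hmin htopfree H hfin hAN
end

section
/- Let H be a finite almost normal subgroup of a countable group G, and let (X,G) be a dynamical system admitting a factor map φ : X → G/N_G(H), where G acts on the finite discrete coset space G/N_G(H) by left multiplication. Then there exist a dynamical system (Y,G) and a factor map π : X → Y such that: (1) there is a factor map φ̃ : Y → G/N_G(H) with φ̃ ∘ π = φ; (2) for every g ∈ G and every y ∈ φ̃⁻¹{gN_G(H)}, and every x ∈ π⁻¹{y}, the stabilizer G_y equals the setwise product (gHg⁻¹)·G_x; (3) for every such y and any x ∈ π⁻¹{y}, the fiber π⁻¹{y} has cardinality |H| / |gHg⁻¹ ∩ G_x|, which is at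 most |H|. -/
open Pointwise

universe u

/-!
Attach to each point `x` the finite subgroup `K x = gHg⁻¹`, where `gN_G(H) = φ x`; this is
well defined because `N_G(H)` normalises `H`, and `K (g • x) = g (K x) g⁻¹`. Then
`x ~ k • x` for `k ∈ K x` is a `G`-invariant equivalence relation, and `Y = X/~` works:
`φ` is constant on classes because `K x` fixes `φ x`; since `K` is locally constant the
quotient map is open and the relation is closed, so `Y` is Hausdorff; the class of `x` is
the `K x`-orbit of `x`, which gives the stabilizer `G_y = K x · G_x` and, by
orbit–stabilizer, the fibre size `|K x| / |K x ∩ G_x|`.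
-/

open MulAction Subgroup

section CosetConj

variable {G : Type*} [Group G] (H : Subgroup G)

lemma Subgroup.conj_smul_eq_self_of_mem_normalizer {n : G} (hn : n ∈ normalizer (H : Set G)) :
    MulAut.conj n • H = H :=
  conjAct_pointwise_smul_eq_self hn

def cosetConj : G ⧸ normalizer (H : Set G) → Subgroup G :=
  Quotient.lift (fun g => MulAut.conj g • H) fun a b hab => by
    have hb : b = a * (a⁻¹ * b) := (mul_inv_cancel_left a b).symm
    rw [hb, map_mul, mul_smul,
      H.conj_smul_eq_self_of_mem_normalizer (QuotientGroup.leftRel_apply.mp hab)]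

@[simp]
lemma cosetConj_mk (g : G) : cosetConj H g = MulAut.conj g • H := rfl

lemma cosetConj_smul (g : G) (q : G ⧸ normalizer (H : Set G)) :
    cosetConj H (g • q) = MulAut.conj g • cosetConj H q := by
  induction q using QuotientGroup.induction_on with
  | H a =>
    show cosetConj H (g * a : G) = _
    rw [cosetConj_mk, cosetConj_mk, map_mul, mul_smul]

lemma cosetConj_le_stabilizer (q : G ⧸ normalizer (H : Set G)) :
    cosetConj H q ≤ stabilizer G q := by
  induction q using QuotientGroup.induction_on with
  | H a =>
    intro k hk
    rw [cosetConj_mk, mem_pointwise_smul_iff_inv_smul_mem, ← map_inv, MulAut.smul_def,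
      MulAut.conj_apply, inv_inv] at hk
    show ((k * a : G) : G ⧸ normalizer (H : Set G)) = a
    rw [QuotientGroup.eq]
    convert inv_mem (le_normalizer hk) using 1
    group

lemma cosetConj_finite (hfin : (H : Set G).Finite) (q : G ⧸ normalizer (H : Set G)) :
    (cosetConj H q : Set G).Finite := by
  induction q using QuotientGroup.induction_on with
  | H a => rw [cosetConj_mk, coe_pointwise_smul]; exact hfin.smul_set

end CosetConj

section LocalOrbitRel

variable {G X : Type*} [Group G] [MulAction G X] {K : X → Subgroup G}

variable (K) in
def IsConjEquivariant : Prop := ∀ (g : G) x, K (g • x) = MulAut.conj g • K x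

lemma IsConjEquivariant.apply_smul_of_mem (hK : IsConjEquivariant K) {k : G} {x : X}
    (hk : k ∈ K x) : K (k • x) = K x :=
  (hK k x).trans (conj_smul_eq_self_of_mem hk)

variable (K) in
def localOrbitRel (hK : IsConjEquivariant K) : Setoid X where
  r x y := ∃ k ∈ K x, k • x = y
  iseqv.refl x := ⟨1, one_mem _, one_smul G x⟩
  iseqv.symm := by
    rintro x - ⟨k, hk, rfl⟩
    exact ⟨k⁻¹, by rw [hK.apply_smul_of_mem hk]; exact inv_mem hk, inv_smul_smul k x⟩
  iseqv.trans := by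
    rintro x - - ⟨k, hk, rfl⟩ ⟨l, hl, rfl⟩
    exact ⟨l * k, mul_mem (hK.apply_smul_of_mem hk ▸ hl) hk, mul_smul l k x⟩

variable {hK : IsConjEquivariant K}

lemma localOrbitRel_mk_eq_mk {x y : X} :
    (⟦x⟧ : Quotient (localOrbitRel K hK)) = ⟦y⟧ ↔ ∃ k ∈ K x, k • x = y :=
  Quotient.eq

lemma localOrbitRel_smul (g : G) {x y : X} (h : localOrbitRel K hK x y) :
    localOrbitRel K hK (g • x) (g • y) := by
  obtain ⟨k, hk, rfl⟩ := h
  refine ⟨MulAut.conj g k, hK g x ▸ smul_mem_pointwise_smul _ _ _ hk, ?_⟩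
  simp [smul_smul]

instance : MulAction G (Quotient (localOrbitRel K hK)) where
  smul g := Quotient.map (g • ·) fun _ _ => localOrbitRel_smul g
  one_smul := Quotient.ind fun x => congrArg _ (one_smul G x)
  mul_smul g h := Quotient.ind fun x => congrArg _ (mul_smul g h x)

@[simp]
lemma localOrbitRel_smul_mk (g : G) (x : X) :
    g • (⟦x⟧ : Quotient (localOrbitRel K hK)) = ⟦g • x⟧ := rfl

lemma localOrbitRel_stabilizer_mk (x : X) :
    (stabilizer G (⟦x⟧ : Quotient (localOrbitRel K hK)) : Set G) =
      (K x : Set G) * stabilizer G x := by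
  ext t
  simp only [SetLike.mem_coe, mem_stabilizer_iff, localOrbitRel_smul_mk, Set.mem_mul]
  constructor
  · intro ht
    obtain ⟨k, hk, hkx⟩ := localOrbitRel_mk_eq_mk.mp ht.symm
    refine ⟨k, hk, k⁻¹ * t, ?_, mul_inv_cancel_left k t⟩
    rw [mul_smul, ← hkx, inv_smul_smul]
  · rintro ⟨k, hk, s, hs, rfl⟩
    rw [mul_smul, mem_stabilizer_iff.mp hs]
    exact (localOrbitRel_mk_eq_mk.mpr ⟨k, hk, rfl⟩).symm

lemma localOrbitRel_preimage_mk (x : X) :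
    Quotient.mk (localOrbitRel K hK) ⁻¹' {⟦x⟧} = orbit (K x) x := by
  ext y
  rw [Set.mem_preimage, Set.mem_singleton_iff, eq_comm, localOrbitRel_mk_eq_mk, mem_orbit_iff]
  simp

lemma localOrbitRel_card_preimage_mk_mul (x : X) :
    Nat.card (Quotient.mk (localOrbitRel K hK) ⁻¹' {⟦x⟧}) * Nat.card ↥(K x ⊓ stabilizer G x) =
      Nat.card (K x) := by
  have hstab : stabilizer (K x) x = (stabilizer G x).subgroupOf (K x) := rfl
  -- orbit–stabilizer in `K x`, then multiplicativity of the index along `⊥ ≤ K x ⊓ G_x ≤ K x`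
  rw [localOrbitRel_preimage_mk, Nat.card_coe_set_eq, ← index_stabilizer, hstab, ← relIndex,
    ← inf_relIndex_right, mul_comm, inf_comm, ← relIndex_bot_left, ← relIndex_bot_left,
    relIndex_mul_relIndex _ _ _ bot_le inf_le_right]

lemma localOrbitRel_card_preimage_mk (x : X) [Finite (K x)] :
    Nat.card (Quotient.mk (localOrbitRel K hK) ⁻¹' {⟦x⟧}) =
      Nat.card (K x) / Nat.card ↥(K x ⊓ stabilizer G x) := by
  have : Finite ↥(K x ⊓ stabilizer G x) := Finite.of_injective _ (inclusion_injective inf_le_left)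
  exact (Nat.div_eq_of_eq_mul_left Nat.card_pos (localOrbitRel_card_preimage_mk_mul x).symm).symm

end LocalOrbitRel

section Topology

variable {G X : Type*} [Group G] [MulAction G X] [TopologicalSpace X] [ContinuousConstSMul G X]
  {K : X → Subgroup G} {hK : IsConjEquivariant K}

instance : ContinuousConstSMul G (Quotient (localOrbitRel K hK)) :=
  ⟨fun g => (continuous_const_smul g).quotient_map' fun _ _ => localOrbitRel_smul g⟩

lemma localOrbitRel_isOpenMap_mk (hloc : IsLocallyConstant K) :
    IsOpenMap (Quotient.mk (localOrbitRel K hK)) := by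
  intro U hU
  have hsat : Quotient.mk (localOrbitRel K hK) ⁻¹' (Quotient.mk _ '' U) =
      ⋃ k : G, k • (U ∩ {x | k ∈ K x}) := by
    ext z
    simp only [Set.mem_preimage, Set.mem_image, localOrbitRel_mk_eq_mk, Set.mem_iUnion,
      Set.mem_smul_set, Set.mem_inter_iff, Set.mem_ofPred_eq]
    exact ⟨fun ⟨x, hx, k, hk, h⟩ => ⟨k, x, ⟨hx, hk⟩, h⟩, fun ⟨k, x, ⟨hx, hk⟩, h⟩ => ⟨x, hx, k, hk, h⟩⟩
  change IsOpen (Quotient.mk _ ⁻¹' _)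
  rw [hsat]
  exact isOpen_iUnion fun k => (hU.inter (hloc {S | k ∈ S})).smul k

lemma localOrbitRel_isClosed [T2Space X] (hloc : IsLocallyConstant K)
    (hfin : ∀ x, (K x : Set G).Finite) :
    IsClosed {p : X × X | (⟦p.1⟧ : Quotient (localOrbitRel K hK)) = ⟦p.2⟧} := by
  have hunion : {p : X × X | (⟦p.1⟧ : Quotient (localOrbitRel K hK)) = ⟦p.2⟧} =
      ⋃ k : G, {p | k ∈ K p.1 ∧ k • p.1 = p.2} := by
    ext
    simp [localOrbitRel_mk_eq_mk]
  have hloc₁ : IsLocallyConstant fun p : X × X => K p.1 := hloc.comp_continuous continuous_fst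
  rw [hunion]
  refine LocallyFinite.isClosed_iUnion (fun p => ?_) fun k => ?_
  · refine ⟨{q | K q.1 = K p.1}, (hloc₁.isOpen_fiber _).mem_nhds rfl, (hfin p.1).subset ?_⟩
    rintro k ⟨q, ⟨hk, -⟩, hq⟩
    exact hq ▸ hk
  · exact (isOpen_compl_iff (s := {p : X × X | k ∈ K p.1})).mp (hloc₁ {S | k ∈ S}ᶜ) |>.inter
      (isClosed_eq ((continuous_const_smul k).comp continuous_fst) continuous_snd)

lemma localOrbitRel_t2Space [T2Space X] (hloc : IsLocallyConstant K)
    (hfin : ∀ x, (K x : Set G).Finite) : T2Space (Quotient (localOrbitRel K hK)) :=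
  (t2Space_iff_of_isOpenQuotientMap ⟨Quotient.mk_surjective, continuous_quotient_mk',
    localOrbitRel_isOpenMap_mk hloc⟩).mpr (localOrbitRel_isClosed hloc hfin)

end Topology

theorem stmt14_general {G : Type*} {X : Type u} [Group G]
    [TopologicalSpace X] [CompactSpace X] [T2Space X]
    [MulAction G X] [ContinuousConstSMul G X]
    (H : Subgroup G) (hfin : (H : Set G).Finite)
    (φ : X → G ⧸ (Subgroup.normalizer (H : Set G)))
    (hφcont : ∀ q : G ⧸ (Subgroup.normalizer (H : Set G)), IsOpen (φ ⁻¹' {q}))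
    (hφsurj : Function.Surjective φ)
    (hφequiv : ∀ (g : G) (x : X), φ (g • x) = g • φ x) :
    ∃ (Y : Type u) (_ : TopologicalSpace Y) (_ : MulAction G Y),
      CompactSpace Y ∧ T2Space Y ∧ ContinuousConstSMul G Y ∧
      ∃ (π : X → Y) (φt : Y → G ⧸ (Subgroup.normalizer (H : Set G))),
        Continuous π ∧ Function.Surjective π ∧
        (∀ (g : G) (x : X), π (g • x) = g • π x) ∧
        (∀ q : G ⧸ (Subgroup.normalizer (H : Set G)), IsOpen (φt ⁻¹' {q})) ∧
        Function.Surjective φt ∧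
        (∀ (g : G) (y : Y), φt (g • y) = g • φt y) ∧
        φt ∘ π = φ ∧
        (∀ (g : G) (y : Y), φt y = (g : G ⧸ (Subgroup.normalizer (H : Set G))) →
          ∀ x ∈ π ⁻¹' {y},
            (MulAction.stabilizer G y : Set G) =
              (conjSubgroup g H : Set G) * (MulAction.stabilizer G x : Set G)) ∧
        (∀ (g : G) (y : Y), φt y = (g : G ⧸ (Subgroup.normalizer (H : Set G))) →
          ∀ x ∈ π ⁻¹' {y},
            Nat.card (π ⁻¹' {y}) =
              Nat.card ↥H / Nat.card ↥(conjSubgroup g H ⊓ MulAction.stabilizer G x) ∧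
            Nat.card (π ⁻¹' {y}) ≤ Nat.card ↥H) := by
  let K : X → Subgroup G := fun x => cosetConj H (φ x)
  have hK : IsConjEquivariant K := fun g x => by
    simp only [K, hφequiv, cosetConj_smul]
  have hK_eq : ∀ (g : G) x, φ x = g → K x = conjSubgroup g H := fun g x hx => by
    simp only [K, hx, cosetConj_mk]
    rfl
  have hφ_mk : ∀ x x', (⟦x⟧ : Quotient (localOrbitRel K hK)) = ⟦x'⟧ → φ x = φ x' := by
    intro x x' h
    obtain ⟨k, hk, rfl⟩ := localOrbitRel_mk_eq_mk.mp h
    rw [hφequiv, cosetConj_le_stabilizer H (φ x) hk]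
  have hφloc : IsLocallyConstant φ := IsLocallyConstant.iff_isOpen_fiber.2 hφcont
  refine ⟨Quotient (localOrbitRel K hK), inferInstance, inferInstance, inferInstance,
    localOrbitRel_t2Space (hφloc.comp _) (fun x => cosetConj_finite H hfin (φ x)), inferInstance,
    Quotient.mk _, Quotient.lift φ fun x x' h => hφ_mk x x' (Quotient.sound h),
    continuous_quotient_mk', Quotient.mk_surjective, fun _ _ => rfl, fun q => hφcont q,
    fun q => ?_, fun g => Quotient.ind fun x => hφequiv g x, rfl, ?_, ?_⟩
  · obtain ⟨x, rfl⟩ := hφsurj q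
    exact ⟨⟦x⟧, rfl⟩
  · rintro g - hg x rfl
    rw [localOrbitRel_stabilizer_mk, hK_eq g x hg]
  · rintro g - hg x rfl
    have : Finite (K x) := (cosetConj_finite H hfin (φ x)).to_subtype
    have hcard : Nat.card (conjSubgroup g H) = Nat.card H :=
      Nat.card_congr (equivSMul (MulAut.conj g) H).toEquiv.symm
    rw [localOrbitRel_card_preimage_mk, hK_eq g x hg, hcard]
    exact ⟨rfl, Nat.div_le_self _ _⟩

/-- Let `H` be a finite almost normal subgroup of a countable group `G`, and let `(X,G)` be a
dynamical system with a factor map `φ : X → G/N_G(H)` (the finite discrete coset space with the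
left multiplication action). Then there are a dynamical system `(Y,G)` and a factor map
`π : X → Y` such that: (1) there is a factor map `φ̃ : Y → G/N_G(H)` with `φ̃ ∘ π = φ`;
(2) for `y ∈ φ̃⁻¹{gN_G(H)}` and `x ∈ π⁻¹{y}`, the stabilizer `G_y` equals the setwise product
`(gHg⁻¹)·G_x`; (3) for such `y` and `x`, the fiber `π⁻¹{y}` has `|H|/|gHg⁻¹ ∩ G_x| ≤ |H|`
elements. -/
theorem stmt14 {G : Type*} {X : Type u} [Group G] [Countable G]
    [TopologicalSpace X] [CompactSpace X] [T2Space X]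
    [MulAction G X] [ContinuousConstSMul G X]
    (H : Subgroup G) (hfin : (H : Set G).Finite) (hAN : (Subgroup.normalizer (H : Set G)).FiniteIndex)
    (φ : X → G ⧸ (Subgroup.normalizer (H : Set G)))
    (hφcont : ∀ q : G ⧸ (Subgroup.normalizer (H : Set G)), IsOpen (φ ⁻¹' {q}))
    (hφsurj : Function.Surjective φ)
    (hφequiv : ∀ (g : G) (x : X), φ (g • x) = g • φ x) :
    ∃ (Y : Type u) (_ : TopologicalSpace Y) (_ : MulAction G Y),
      CompactSpace Y ∧ T2Space Y ∧ ContinuousConstSMul G Y ∧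
      ∃ (π : X → Y) (φt : Y → G ⧸ (Subgroup.normalizer (H : Set G))),
        Continuous π ∧ Function.Surjective π ∧
        (∀ (g : G) (x : X), π (g • x) = g • π x) ∧
        (∀ q : G ⧸ (Subgroup.normalizer (H : Set G)), IsOpen (φt ⁻¹' {q})) ∧
        Function.Surjective φt ∧
        (∀ (g : G) (y : Y), φt (g • y) = g • φt y) ∧
        φt ∘ π = φ ∧
        (∀ (g : G) (y : Y), φt y = (g : G ⧸ (Subgroup.normalizer (H : Set G))) →
          ∀ x ∈ π ⁻¹' {y},
            (MulAction.stabilizer G y : Set G) =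
              (conjSubgroup g H : Set G) * (MulAction.stabilizer G x : Set G)) ∧
        (∀ (g : G) (y : Y), φt y = (g : G ⧸ (Subgroup.normalizer (H : Set G))) →
          ∀ x ∈ π ⁻¹' {y},
            Nat.card (π ⁻¹' {y}) =
              Nat.card ↥H / Nat.card ↥(conjSubgroup g H ⊓ MulAction.stabilizer G x) ∧
            Nat.card (π ⁻¹' {y}) ≤ Nat.card ↥H) :=
  stmt14_general H hfin φ hφcont hφsurj hφequiv
end

section
/- Let G be a countable group. Then G is allosteric if and only if for every finite normal subgroup H of G the quotient group G/H is allosteric. -/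
/-!
A finite normal subgroup `H` acts freely on a minimal topologically free `G`-space `X`: the points
fixed by some nontrivial element of `H` form a closed `G`-invariant set, which by minimality is
empty or everything, and it misses the free points. So `G ⧸ H` acts on `X / H`, a compact Hausdorff
space, and a point of `X / H` is free exactly when its lifts are. The pushforward measure stays
invariant and ergodic and gives the free set the same mass as upstairs, while the free set of
`X / H` is a dense `G_δ`, hence residual. The converse is the case `H = ⊥`.
-/

open MeasureTheory Pointwise

/-- A countable group `G` is allosteric if it admits a minimal action by homeomorphisms on a
compact Hausdorff space with an ergodic invariant Borel probability measure, which is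
topologically free but not essentially free. -/
def Allosteric (G : Type*) [Group G] : Prop :=
  ∃ (X : Type) (_ : TopologicalSpace X) (_ : MeasurableSpace X) (_ : MulAction G X)
    (μ : Measure X),
    CompactSpace X ∧ T2Space X ∧ BorelSpace X ∧ ContinuousConstSMul G X ∧
    IsProbabilityMeasure μ ∧
    (∀ x : X, Dense (MulAction.orbit G x)) ∧
    (∀ (g : G) (A : Set X), μ (g • A) = μ A) ∧
    (∀ A : Set X, MeasurableSet A → (∀ g : G, g • A = A) → μ A = 0 ∨ μ A = 1) ∧
    ({x : X | MulAction.stabilizer G x = ⊥} ∈ residual X) ∧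
    μ {x : X | MulAction.stabilizer G x = ⊥} ≠ 1

open Function

namespace MulAction

variable {G X : Type*} [Group G] [MulAction G X]

lemma stabilizer_eq_bot_iff_forall {x : X} :
    stabilizer G x = ⊥ ↔ ∀ g : G, g • x = x → g = 1 := by
  simp only [Subgroup.eq_bot_iff_forall, mem_stabilizer_iff]

lemma setOf_stabilizer_eq_bot_eq_iInter :
    {x : X | stabilizer G x = ⊥} = ⋂ (g : G) (_ : g ≠ 1), (fixedBy X g)ᶜ := by
  ext x
  simp only [Set.mem_ofPred_eq, stabilizer_eq_bot_iff_forall, Set.mem_iInter, Set.mem_compl_iff,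
    mem_fixedBy]
  exact forall_congr' fun g => not_imp_not.symm

namespace orbitRel.Quotient

variable (H : Subgroup G) [hH : H.Normal]

instance instMulActionQuotientGroup : MulAction (G ⧸ H) (orbitRel.Quotient H X) where
  smul γ q := Quotient.liftOn₂' γ q (fun g x => Quotient.mk'' (g • x)) <| by
    rintro g₁ x₁ g₂ - hg ⟨h, rfl⟩
    rw [QuotientGroup.leftRel_apply] at hg
    refine Quotient.sound' ⟨⟨g₁ * (h * (g₁⁻¹ * g₂)⁻¹) * g₁⁻¹,
      hH.conj_mem _ (H.mul_mem h.2 (H.inv_mem hg)) _⟩, ?_⟩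
    simp only [Subgroup.smul_def, ← mul_smul]
    group
  one_smul q := Quotient.inductionOn' q fun x => congrArg Quotient.mk'' (one_smul G x)
  mul_smul γ₁ γ₂ q := by
    induction γ₁ using Quotient.inductionOn' with | h g₁ =>
    induction γ₂ using Quotient.inductionOn' with | h g₂ =>
    induction q using Quotient.inductionOn' with | h x =>
    exact congrArg Quotient.mk'' (mul_smul g₁ g₂ x)

variable (X) in
def mkHom : X →ₑ[((↑) : G → G ⧸ H)] orbitRel.Quotient H X where
  toFun := Quotient.mk''
  map_smul' _ _ := rfl

lemma mkHom_surjective : Surjective (mkHom X H) := Quotient.mk''_surjective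

lemma stabilizer_mkHom_eq_bot_iff (hfree : ∀ h ∈ H, ∀ x : X, h • x = x → h = 1) {x : X} :
    stabilizer (G ⧸ H) (mkHom X H x) = ⊥ ↔ stabilizer G x = ⊥ := by
  simp only [stabilizer_eq_bot_iff_forall]
  constructor
  · intro hx g hg
    refine hfree g ((QuotientGroup.eq_one_iff g).1 (hx g ?_)) x hg
    rw [← map_smulₛₗ, hg]
  · intro hx γ hγ
    induction γ using Quotient.inductionOn' with | h g =>
    obtain ⟨h, hh⟩ : g • x ∈ MulAction.orbit H x := Quotient.exact' hγ
    have : (h : G)⁻¹ * g = 1 := hx _ (by rw [mul_smul, ← hh]; exact inv_smul_smul (h : G) x)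
    rw [inv_mul_eq_one] at this
    exact (QuotientGroup.eq_one_iff g).2 (this ▸ h.2)

end orbitRel.Quotient

lemma dense_orbit_of_surjective {K Y : Type*} [Group K] [MulAction K Y] [TopologicalSpace X]
    [TopologicalSpace Y] {φ : G → K} (f : X →ₑ[φ] Y) (hf : Continuous f) (hsurj : Surjective f)
    {x : X} (hx : Dense (orbit G x)) : Dense (orbit K (f x)) := by
  refine (hsurj.denseRange.dense_image hf hx).mono ?_
  rintro - ⟨-, ⟨g, rfl⟩, rfl⟩
  exact ⟨φ g, (map_smulₛₗ f g x).symm⟩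

section Topology

variable [TopologicalSpace X] [ContinuousConstSMul G X]

lemma isClosed_fixedBy [T2Space X] (g : G) : IsClosed (fixedBy X g) :=
  isClosed_eq (continuous_const_smul g) continuous_id

lemma isGδ_setOf_stabilizer_eq_bot [T2Space X] [Countable G] :
    IsGδ {x : X | stabilizer G x = ⊥} := by
  rw [setOf_stabilizer_eq_bot_eq_iInter]
  exact .iInter fun g => .iInter fun _ => (isClosed_fixedBy g).isOpen_compl.isGδ

lemma eq_one_of_mem_of_smul_eq [T2Space X] {H : Subgroup G} [H.Normal] (hH : (H : Set G).Finite)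
    (hmin : ∀ x : X, Dense (orbit G x)) (hfree : {x : X | stabilizer G x = ⊥}.Nonempty)
    {h : G} (hh : h ∈ H) {x : X} (hx : h • x = x) : h = 1 := by
  by_contra h1
  set E := ⋃ g ∈ (H : Set G) \ {1}, fixedBy X g
  have hE : IsClosed E := hH.sdiff.isClosed_biUnion fun g _ => isClosed_fixedBy g
  have horbit : orbit G x ⊆ E := by
    rintro - ⟨g, rfl⟩
    refine Set.mem_biUnion (x := g * h * g⁻¹) ⟨Subgroup.Normal.conj_mem ‹_› h hh g, ?_⟩ ?_
    · simpa [mul_inv_eq_one] using h1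
    · rw [← smul_fixedBy]
      exact Set.smul_mem_smul_set hx
  have hEuniv : E = Set.univ := by rw [← hE.closure_eq]; exact ((hmin x).mono horbit).closure_eq
  obtain ⟨y, hy⟩ := hfree
  obtain ⟨g, ⟨-, hg1⟩, hgy⟩ := Set.mem_iUnion₂.1 (hEuniv ▸ Set.mem_univ y)
  exact hg1 (stabilizer_eq_bot_iff_forall.1 hy g hgy)

instance orbitRel.Quotient.instContinuousConstSMul (H : Subgroup G) [H.Normal] :
    ContinuousConstSMul (G ⧸ H) (orbitRel.Quotient H X) where
  continuous_const_smul γ := by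
    induction γ using Quotient.inductionOn' with | h g =>
    exact isQuotientMap_quotient_mk'.continuous_iff.2
      (continuous_quotient_mk'.comp (continuous_const_smul g))

end Topology

end MulAction

section Measure

variable {G K X Y : Type*} [Group G] [Group K] [MulAction G X] [MulAction K Y]
  [MeasurableSpace X] [MeasurableSpace Y] {φ : G → K} {f : X →ₑ[φ] Y} (μ : Measure X)

lemma smulInvariantMeasure_map_of_surjective [MeasurableConstSMul K Y]
    [SMulInvariantMeasure G X μ] (hφ : Surjective φ) (hf : Measurable f) :
    SMulInvariantMeasure K Y (μ.map f) where
  measure_preimage_smul k S hS := by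
    obtain ⟨g, rfl⟩ := hφ k
    rw [Measure.map_apply hf (hS.preimage (measurable_const_smul _)), Measure.map_apply hf hS,
      ← measure_preimage_smul μ g (f ⁻¹' S)]
    congr 1
    ext x
    simp [map_smulₛₗ]

lemma map_eq_zero_or_eq_one_of_smul_eq (hf : Measurable f)
    (herg : ∀ A, MeasurableSet A → (∀ g : G, g • A = A) → μ A = 0 ∨ μ A = 1)
    {B : Set Y} (hB : MeasurableSet B) (hBinv : ∀ k : K, k • B = B) :
    μ.map f B = 0 ∨ μ.map f B = 1 := by
  rw [Measure.map_apply hf hB]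
  exact herg _ (hf hB) fun g => by rw [← Group.preimage_smul_setₛₗ φ f, hBinv]

end Measure

open MulAction in
theorem Allosteric.quotient {G : Type*} [Group G] [Countable G] (hG : Allosteric G)
    (H : Subgroup G) [H.Normal] (hH : (H : Set G).Finite) : Allosteric (G ⧸ H) := by
  obtain ⟨X, _, _, _, μ, _, _, _, _, _, hmin, hinv, herg, hres, hness⟩ := hG
  have := nonempty_of_isProbabilityMeasure μ
  have : Finite H := hH.to_subtype
  have : Countable (G ⧸ H) := Quotient.countable
  have : ContinuousConstSMul H X := ⟨fun h => continuous_const_smul (h : G)⟩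
  have : SMulInvariantMeasure G X μ :=
    ⟨fun g A _ => by rw [Set.preimage_smul, hinv]⟩
  have hfree (h : G) (hh : h ∈ H) (x : X) : h • x = x → h = 1 :=
    eq_one_of_mem_of_smul_eq hH hmin (dense_of_mem_residual hres).nonempty hh
  let Q := orbitRel.Quotient H X
  let π := orbitRel.Quotient.mkHom X H
  let _ : MeasurableSpace Q := borel Q
  have : BorelSpace Q := ⟨rfl⟩
  have hπ : Continuous π := continuous_quotient_mk'
  have hfreeQ : π ⁻¹' {q : Q | stabilizer (G ⧸ H) q = ⊥} = {x | stabilizer G x = ⊥} :=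
    Set.ext fun x => orbitRel.Quotient.stabilizer_mkHom_eq_bot_iff H hfree
  have hmeasQ : MeasurableSet {q : Q | stabilizer (G ⧸ H) q = ⊥} :=
    isGδ_setOf_stabilizer_eq_bot.measurableSet
  have := smulInvariantMeasure_map_of_surjective μ QuotientGroup.mk_surjective hπ.measurable
  refine ⟨Q, inferInstance, inferInstance, inferInstance, μ.map π, inferInstance, inferInstance,
    inferInstance, inferInstance, Measure.isProbabilityMeasure_map hπ.aemeasurable,
    ?_, measure_smul _, fun B hB => map_eq_zero_or_eq_one_of_smul_eq μ hπ.measurable herg hB,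
    ?_, ?_⟩
  · rintro ⟨x⟩
    exact dense_orbit_of_surjective π hπ (orbitRel.Quotient.mkHom_surjective H) (hmin x)
  · refine residual_of_dense_Gδ isGδ_setOf_stabilizer_eq_bot ?_
    rw [← Set.image_preimage_eq {q : Q | stabilizer (G ⧸ H) q = ⊥}
      (orbitRel.Quotient.mkHom_surjective H), hfreeQ]
    exact (orbitRel.Quotient.mkHom_surjective H).denseRange.dense_image hπ
      (dense_of_mem_residual hres)
  · rwa [Measure.map_apply hπ.measurable hmeasQ, hfreeQ]

open MulAction in
theorem Allosteric.of_mulEquiv {G K : Type*} [Group G] [Group K] (e : G ≃* K)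
    (hK : Allosteric K) : Allosteric G := by
  obtain ⟨X, _, _, _, μ, hcomp, ht2, hborel, _, hprob, hmin, hinv, herg, hres, hness⟩ := hK
  let _ : MulAction G X := .compHom X e.toMonoidHom
  have hstab (x : X) : stabilizer G x = ⊥ ↔ stabilizer K x = ⊥ := by
    simp only [stabilizer_eq_bot_iff_forall,
      e.surjective.forall (p := fun k => k • x = x → k = 1)]
    exact forall_congr' fun g => imp_congr_right fun _ => (MulEquiv.map_eq_one_iff e).symm
  have horbit (x : X) : orbit G x = orbit K x := by
    ext y
    simp only [mem_orbit_iff]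
    exact (e.surjective.exists (p := fun k => k • x = y)).symm
  refine ⟨X, inferInstance, inferInstance, inferInstance, μ, hcomp, ht2, hborel,
    ⟨fun g => continuous_const_smul (e g)⟩, hprob, fun x => horbit x ▸ hmin x,
    fun g => hinv (e g), fun A hA hAinv => herg A hA fun k => ?_, ?_, ?_⟩
  · obtain ⟨g, rfl⟩ := e.surjective k
    exact hAinv g
  · simpa only [hstab] using hres
  · simpa only [hstab] using hness

/-- A countable group `G` is allosteric if and only if for every finite normal subgroup `H` of
`G`, the quotient `G/H` is allosteric. -/
theorem stmt16 {G : Type*} [Group G] [Countable G] :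
    Allosteric G ↔
      ∀ (H : Subgroup G) (_ : H.Normal), (H : Set G).Finite → Allosteric (G ⧸ H) :=
  ⟨fun hG H _ hH => hG.quotient H hH, fun h =>
    (h ⊥ inferInstance (by simp)).of_mulEquiv QuotientGroup.quotientBot.symm⟩
end

section
/- Let G be a countable group and suppose there exists a finite almost normal subgroup H of G with H ∩ R(G) = {1}, where R(G) is the intersection of all finite-index subgroups of G. Let (Y,G) be a dynamical system with Y_H ≠ ∅. Then there exist a dynamical system (X,G), a factor map π : X → Y, and a constant m ≥ 1 such that π⁻¹(Y_H) ⊆ {x ∈ X : G_x = {1}} and |π⁻¹{y}| ≤ m for all y ∈ Y_H. Moreover: (1) if (Y,G) is minimal, then (X,G) is minimal and topologically free; (2) if there exists an ergodic invariant Borel probability measure μ of (Y,G) with μ(Y_H) = 1, then there exists an invariant Borel probability measure ν on X with π_*ν = μ such that (X,G,ν) is essentially free. -/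
open MeasureTheory Pointwise

/-- The set `Y_H` of points of `Y` whose stabilizer is conjugate to `H`. -/
def setYH (G : Type*) {Y : Type*} [Group G] [MulAction G Y] (H : Subgroup G) : Set Y :=
  {y : Y | ∃ g : G, MulAction.stabilizer G y = conjSubgroup g H}

/-- `R(G)`: the intersection of all finite-index subgroups of `G`. -/
def residualSubgroup (G : Type*) [Group G] : Subgroup G :=
  ⨅ (H : Subgroup G) (_ : H.FiniteIndex), H

universe u

/-!
Since `H` is finite and meets `R(G)` trivially, some normal subgroup `N` of finite index meets `H`,
hence every conjugate of `H`, trivially. On `Y × G/N` the stabilizer of `(y, z)` is `G_y ∩ N`,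
which is trivial for `y ∈ Y_H`. Take for `X` a closed invariant subset of `Y × G/N` projecting
onto `Y`, chosen minimal when `Y` is minimal; its fibres have at most `[G : N]` points. In the
minimal case the orbit of a free point is dense, so no `g ≠ 1` fixes an open set, and as `G` is
countable the free points form a residual set. An invariant measure `μ` lifts by spreading the mass
at `y` uniformly over the fibre above `y`; since `Y_H` is a Borel set of full measure lying under
free points, the lift is essentially free.
-/

open MulAction
open scoped ENNReal

section GroupTheory

variable {G : Type*} [Group G]

theorem exists_normal_finiteIndex_inf_eq_bot {H : Subgroup G} (hH : (H : Set G).Finite)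
    (hres : H ⊓ residualSubgroup G = ⊥) :
    ∃ N : Subgroup G, N.Normal ∧ N.FiniteIndex ∧ N ⊓ H = ⊥ := by
  have : Finite H := hH.to_subtype
  have hsep : ∀ h : H, ∃ K : Subgroup G, K.FiniteIndex ∧ ((h : G) ∈ K → (h : G) = 1) := by
    intro h
    by_cases hR : (h : G) ∈ residualSubgroup G
    · exact ⟨⊤, inferInstance, fun _ => Subgroup.mem_bot.1 (hres ▸ ⟨h.2, hR⟩)⟩
    · simp only [residualSubgroup, Subgroup.mem_iInf, not_forall] at hR
      obtain ⟨K, hK, hhK⟩ := hR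
      exact ⟨K, hK, fun h' => absurd h' hhK⟩
  choose K hK hKH using hsep
  have : (⨅ h, K h).FiniteIndex := Subgroup.finiteIndex_iInf hK
  refine ⟨(⨅ h, K h).normalCore, Subgroup.normalCore_normal _, inferInstance, ?_⟩
  refine (Subgroup.eq_bot_iff_forall _).2 fun x ⟨hxN, hxH⟩ => hKH ⟨x, hxH⟩ ?_
  exact Subgroup.mem_iInf.1 (Subgroup.normalCore_le _ hxN) ⟨x, hxH⟩

theorem Subgroup.Normal.inf_conjSubgroup_eq_bot {N H : Subgroup G} (hN : N.Normal)
    (hNH : N ⊓ H = ⊥) (g : G) : N ⊓ conjSubgroup g H = ⊥ := by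
  refine (Subgroup.eq_bot_iff_forall _).2 fun x ⟨hxN, h, hh, hhx⟩ => ?_
  have hhN : h ∈ N := by
    simpa [← hhx, mul_assoc] using hN.conj_mem _ hxN g⁻¹
  have : h = 1 := Subgroup.mem_bot.1 (hNH ▸ ⟨hhN, hh⟩)
  simp [← hhx, this]

theorem stabilizer_quotient_of_normal (N : Subgroup G) [N.Normal] (q : G ⧸ N) :
    stabilizer G q = N := by
  induction q using QuotientGroup.induction_on with
  | H c => ext g; simp

theorem exists_finite_mulAction_stabilizer_eq (N : Subgroup G) [N.Normal] [N.FiniteIndex] :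
    ∃ (Z : Type u) (_ : MulAction G Z), Finite Z ∧ Nonempty Z ∧ ∀ z : Z, stabilizer G z = N := by
  refine ⟨Shrink.{u} (G ⧸ N), inferInstance, inferInstance, inferInstance, fun z => ?_⟩
  refine (Subgroup.ext fun g => ?_).trans (stabilizer_quotient_of_normal N ((equivShrink _).symm z))
  simp [mem_stabilizer_iff, ← equivShrink_symm_smul, (equivShrink _).symm.injective.eq_iff]

end GroupTheory

section Topology

variable {G X : Type*} [Group G] [TopologicalSpace X] [MulAction G X] [ContinuousConstSMul G X]

instance SubMulAction.continuousConstSMul (M : SubMulAction G X) : ContinuousConstSMul G M :=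
  ⟨fun g => (continuous_subtype_val.const_smul g).subtype_mk _⟩

theorem residual_stabilizer_eq_bot [T2Space X] [Countable G] {x₀ : X}
    (hfree : stabilizer G x₀ = ⊥) (hdense : Dense (orbit G x₀)) :
    {x : X | stabilizer G x = ⊥} ∈ residual X := by
  have hfix : {x : X | stabilizer G x = ⊥} = ⋂ g : {g : G // g ≠ 1}, (fixedBy X (g : G))ᶜ := by
    ext x
    simp [Subgroup.eq_bot_iff_forall, not_imp_not]
  rw [hfix, countable_iInter_mem]
  rintro ⟨g, hg⟩
  have hclosed : IsClosed (fixedBy X g) := isClosed_eq (continuous_const_smul g) continuous_id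
  refine residual_of_dense_open hclosed.isOpen_compl ?_
  rw [← interior_eq_empty_iff_dense_compl, ← Set.not_nonempty_iff_eq_empty]
  intro hU
  -- some translate `h • x₀` of the free point lies in the interior, so `h⁻¹ * g * h` fixes `x₀`
  obtain ⟨_, ⟨h, rfl⟩, hh⟩ := hdense.exists_mem_open isOpen_interior hU
  have hgh : g • h • x₀ = h • x₀ := mem_fixedBy.1 (interior_subset hh)
  have hconj : h⁻¹ * g * h ∈ stabilizer G x₀ := by simp [mem_stabilizer_iff, mul_smul, hgh]
  rw [hfree, Subgroup.mem_bot] at hconj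
  rw [mul_assoc, inv_mul_eq_one, right_eq_mul] at hconj
  exact hg hconj

theorem exists_isClosed_subMulAction_isMinimal [CompactSpace X] [Nonempty X] :
    ∃ M : SubMulAction G X, IsClosed (M : Set X) ∧ Nonempty M ∧ IsMinimal G M := by
  let S := {C : Set X | C.Nonempty ∧ IsClosed C ∧ ∀ g : G, g • C ⊆ C}
  have hchain : ∀ c ⊆ S, IsChain (· ⊆ ·) c → c.Nonempty → ∃ lb ∈ S, ∀ C ∈ c, lb ⊆ C := by
    rintro c hcS hc ⟨C, hC⟩
    have : Nonempty c := ⟨⟨C, hC⟩⟩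
    refine ⟨⋂₀ c, ⟨?_, isClosed_sInter fun C hC => (hcS hC).2.1, fun g => ?_⟩,
      fun C hC => Set.sInter_subset_of_mem hC⟩
    · exact IsCompact.nonempty_sInter_of_directed_nonempty_isCompact_isClosed
        (IsChain.directedOn (r := (· ⊇ ·)) (s := c) hc.symm) (fun C hC => (hcS hC).1)
        (fun C hC => (hcS hC).2.1.isCompact) fun C hC => (hcS hC).2.1
    · rintro _ ⟨p, hp, rfl⟩
      exact Set.mem_sInter.2 fun C hC => (hcS hC).2.2 g (Set.smul_mem_smul_set (hp C hC))
  obtain ⟨M, -, hM⟩ := zorn_superset_nonempty S hchain Set.univ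
    ⟨Set.univ_nonempty, isClosed_univ, fun _ => Set.subset_univ _⟩
  obtain ⟨⟨p, hp⟩, hMc, hMinv⟩ := hM.prop
  let M' : SubMulAction G X := ⟨M, fun g _ hx => hMinv g (Set.smul_mem_smul_set hx)⟩
  refine ⟨M', hMc, ⟨⟨p, hp⟩⟩, ⟨fun x x' => closure_subtype.2 ?_⟩⟩
  have horbit : closure (orbit G (x : X)) ∈ S :=
    ⟨⟨x, subset_closure (mem_orbit_self _)⟩, isClosed_closure,
      fun g => smul_closure_orbit_subset g _⟩
  have hsub : closure (orbit G (x : X)) ⊆ M := by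
    refine closure_minimal ?_ hMc
    rintro _ ⟨g, rfl⟩
    exact M'.smul_mem g x.2
  rw [SubMulAction.val_image_orbit]
  exact hM.eq_of_subset horbit hsub ▸ x'.2

theorem exists_isClosed_subMulAction_surjective {Y : Type*} [CompactSpace X]
    [TopologicalSpace Y] [T2Space Y] [MulAction G Y] {π : X → Y} (hπ : Continuous π)
    (hsurj : Function.Surjective π) (hequiv : ∀ (g : G) (x : X), π (g • x) = g • π x) :
    ∃ M : SubMulAction G X, IsClosed (M : Set X) ∧ Function.Surjective (fun x : M => π x) ∧
      (IsMinimal G Y → IsMinimal G M) := by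
  by_cases h : IsMinimal G Y ∧ Nonempty X
  · obtain ⟨hY, hX⟩ := h
    obtain ⟨M, hMc, ⟨x⟩, hM⟩ := exists_isClosed_subMulAction_isMinimal (G := G) (X := X)
    refine ⟨M, hMc, fun y => ?_, fun _ => hM⟩
    have himage : π '' M = Set.univ := by
      refine (eq_empty_or_univ_of_smul_invariant_closed G (hMc.isCompact.image hπ).isClosed
        ?_).resolve_left (Set.Nonempty.ne_empty ⟨_, Set.mem_image_of_mem π x.2⟩)
      rintro g _ ⟨_, ⟨x, hx, rfl⟩, rfl⟩
      exact ⟨g • x, M.smul_mem g hx, hequiv g x⟩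
    obtain ⟨x, hx, rfl⟩ := himage.symm ▸ Set.mem_univ y
    exact ⟨⟨x, hx⟩, rfl⟩
  · refine ⟨⊤, isClosed_univ, fun y => ?_, fun hY => ⟨fun x => absurd ⟨hY, ⟨x⟩⟩ h⟩⟩
    obtain ⟨x, rfl⟩ := hsurj y
    exact ⟨⟨x, trivial⟩, rfl⟩

end Topology

section FiberLift

variable {G Y Z : Type*} [Fintype Z] {M : Set (Y × Z)}

noncomputable def fiberCount (M : Set (Y × Z)) (y : Y) : ℝ≥0∞ := ∑ z, M.indicator 1 (y, z)

noncomputable def fiberDensity (M : Set (Y × Z)) (z : Z) (y : Y) : ℝ≥0∞ :=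
  M.indicator (fun p => (fiberCount M p.1)⁻¹) (y, z)

theorem sum_fiberDensity (hsurj : ∀ y, ∃ z, (y, z) ∈ M) (y : Y) : ∑ z, fiberDensity M z y = 1 := by
  classical
  have hcount_ne_zero : fiberCount M y ≠ 0 := by
    obtain ⟨z, hz⟩ := hsurj y
    exact Finset.sum_eq_zero_iff.not.2 fun h => by simpa [hz] using h z (Finset.mem_univ z)
  have hcount_ne_top : fiberCount M y ≠ ⊤ :=
    ENNReal.sum_ne_top.2 fun z _ => by by_cases hz : (y, z) ∈ M <;> simp [hz]
  have hdens : ∀ z, fiberDensity M z y = M.indicator 1 (y, z) * (fiberCount M y)⁻¹ := fun z => by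
    by_cases hz : (y, z) ∈ M <;> simp [fiberDensity, hz]
  simp_rw [hdens, ← Finset.sum_mul]
  exact ENNReal.mul_inv_cancel hcount_ne_zero hcount_ne_top

variable [Group G] [MulAction G Y] [MulAction G Z]

theorem fiberDensity_smul (hMinv : ∀ (g : G) (p : Y × Z), g • p ∈ M ↔ p ∈ M) (g : G) (z : Z)
    (y : Y) : fiberDensity M (g • z) (g • y) = fiberDensity M z y := by
  classical
  have hcount : fiberCount M (g • y) = fiberCount M y := by
    rw [fiberCount, ← Equiv.sum_comp (MulAction.toPerm g)]
    simp only [fiberCount, Set.indicator_apply, MulAction.toPerm_apply, ← Prod.smul_mk, hMinv,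
      Pi.one_apply]
  rw [fiberDensity, fiberDensity, ← Prod.smul_mk]
  simp only [Set.indicator_apply, hMinv, Prod.smul_fst, hcount]

variable [MeasurableSpace Y] [MeasurableSpace Z]

theorem map_smul_withDensity [MeasurableConstSMul G Y] (μ : Measure Y) [SMulInvariantMeasure G Y μ]
    (g : G) (f : Y → ℝ≥0∞) :
    (μ.withDensity f).map (g • ·) = μ.withDensity fun y => f (g⁻¹ • y) := by
  ext s hs
  rw [Measure.map_apply (measurable_const_smul g) hs, withDensity_apply _ hs,
    withDensity_apply _ (measurable_const_smul g hs)]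
  simpa using ((measurePreserving_smul g μ).setLIntegral_comp_preimage_emb
    (measurableEmbedding_const_smul g) (fun y => f (g⁻¹ • y)) s)

/-- The lift of `μ` that spreads the mass at `y` uniformly over the fibre of `M` above `y`. -/
noncomputable def fiberLift (μ : Measure Y) (M : Set (Y × Z)) : Measure (Y × Z) :=
  Measure.sum fun z => (μ.withDensity (fiberDensity M z)).map (·, z)

theorem measurable_fiberDensity (hM : MeasurableSet M) (z : Z) : Measurable (fiberDensity M z) := by
  have hcount : Measurable (fiberCount M) :=
    Finset.measurable_sum _ fun z _ => (measurable_const.indicator hM).comp measurable_prodMk_right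
  exact ((hcount.comp measurable_fst).inv.indicator hM).comp measurable_prodMk_right

theorem map_fst_fiberLift (μ : Measure Y) (hM : MeasurableSet M) (hsurj : ∀ y, ∃ z, (y, z) ∈ M) :
    (fiberLift μ M).map Prod.fst = μ := by
  have hfst : ∀ z : Z, Prod.fst ∘ (·, z) = (id : Y → Y) := fun _ => rfl
  rw [fiberLift, Measure.map_sum measurable_fst.aemeasurable]
  simp_rw [Measure.map_map measurable_fst measurable_prodMk_right, hfst, Measure.map_id]
  have hsum : ∑ z, fiberDensity M z = 1 :=
    funext fun y => by rw [Finset.sum_apply, sum_fiberDensity hsurj, Pi.one_apply]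
  rw [← withDensity_tsum (measurable_fiberDensity hM), tsum_fintype, hsum, withDensity_one]

theorem fiberLift_compl (μ : Measure Y) (hM : MeasurableSet M) : fiberLift μ M Mᶜ = 0 := by
  rw [fiberLift, Measure.sum_apply _ hM.compl, ENNReal.tsum_eq_zero]
  intro z
  rw [Measure.map_apply measurable_prodMk_right hM.compl,
    withDensity_apply_eq_zero' (measurable_fiberDensity hM z).aemeasurable]
  have hempty : {y | fiberDensity M z y ≠ 0} ∩ (·, z) ⁻¹' Mᶜ = ∅ := by
    ext y
    by_cases hy : (y, z) ∈ M <;> simp [fiberDensity, hy]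
  rw [hempty, measure_empty]

instance Prod.measurableConstSMul [MeasurableConstSMul G Y] [MeasurableConstSMul G Z] :
    MeasurableConstSMul G (Y × Z) :=
  ⟨fun g => (measurable_const_smul g).prodMap (measurable_const_smul g)⟩

theorem map_smul_fiberLift [MeasurableConstSMul G Y] [MeasurableConstSMul G Z] (μ : Measure Y)
    [SMulInvariantMeasure G Y μ] (hMinv : ∀ (g : G) (p : Y × Z), g • p ∈ M ↔ p ∈ M) (g : G) :
    (fiberLift μ M).map (g • ·) = fiberLift μ M := by
  have hdens : ∀ z, (fun y => fiberDensity M z (g⁻¹ • y)) = fiberDensity M (g • z) :=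
    fun z => funext fun y => by rw [← fiberDensity_smul hMinv g, smul_inv_smul]
  calc (fiberLift μ M).map (g • ·)
      = Measure.sum fun z => (μ.withDensity (fiberDensity M (g • z))).map (·, g • z) := by
        rw [fiberLift, Measure.map_sum (measurable_const_smul g).aemeasurable]
        congr 1
        funext z
        have hcomm : (g • ·) ∘ (·, z) = (·, g • z) ∘ (g • · : Y → Y) := rfl
        rw [Measure.map_map (measurable_const_smul g) measurable_prodMk_right, hcomm,
          ← Measure.map_map measurable_prodMk_right (measurable_const_smul g),
          map_smul_withDensity, hdens]
    _ = fiberLift μ M :=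
        Measure.sum_comp_equiv (MulAction.toPerm g) fun z =>
          (μ.withDensity (fiberDensity M z)).map (·, z)

theorem SubMulAction.exists_smulInvariantMeasure_map_eq [MeasurableConstSMul G Y]
    [MeasurableConstSMul G Z] (μ : Measure Y) [SMulInvariantMeasure G Y μ]
    (M : SubMulAction G (Y × Z)) (hM : MeasurableSet (M : Set (Y × Z)))
    (hsurj : ∀ y, ∃ z, (y, z) ∈ M) :
    ∃ ν : Measure M, SMulInvariantMeasure G M ν ∧ ν.map (fun x : M => (x : Y × Z).1) = μ := by
  set ρ := fiberLift μ (M : Set (Y × Z))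
  set ν : Measure M := ρ.comap Subtype.val
  have hemb : MeasurableEmbedding (Subtype.val : M → Y × Z) := .subtype_coe hM
  have hval : ν.map Subtype.val = ρ := by
    rw [hemb.map_comap, Subtype.range_coe]
    exact Measure.restrict_eq_self_of_ae_mem (mem_ae_iff.2 (fiberLift_compl μ hM))
  have hmeas : ∀ g : G, Measurable (g • · : M → M) :=
    fun g => (measurable_subtype_coe.const_smul g).subtype_mk
  have hinv : ∀ g : G, ν.map (g • ·) = ν := fun g => by
    rw [← hemb.comap_map (ν.map (g • ·)), Measure.map_map measurable_subtype_coe (hmeas g),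
      show Subtype.val ∘ (g • · : M → M) = (g • ·) ∘ Subtype.val from rfl,
      ← Measure.map_map (measurable_const_smul g) measurable_subtype_coe, hval,
      map_smul_fiberLift μ (fun g p => M.smul_mem_iff' g) g]
  refine ⟨ν, ⟨fun g s hs => ?_⟩, ?_⟩
  · rw [← Measure.map_apply (hmeas g) hs, hinv]
  · rw [show (fun x : M => (x : Y × Z).1) = Prod.fst ∘ Subtype.val from rfl,
      ← Measure.map_map measurable_fst measurable_subtype_coe, hval,
      map_fst_fiberLift μ hM hsurj]

end FiberLift

section Stabilizers

variable {G Y Z : Type*} [Group G] [MulAction G Y] [MulAction G Z]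

theorem stabilizer_prodMk (y : Y) (z : Z) :
    stabilizer G (y, z) = stabilizer G y ⊓ stabilizer G z := by
  ext g
  simp [mem_stabilizer_iff, Prod.ext_iff]

theorem stabilizer_eq_bot_of_fst_mem_setYH {H : Subgroup G}
    (hZ : ∀ (z : Z) (g : G), stabilizer G z ⊓ conjSubgroup g H = ⊥) {p : Y × Z}
    (hp : p.1 ∈ setYH G H) : stabilizer G p = ⊥ := by
  obtain ⟨g, hg⟩ := hp
  rw [← Prod.mk.eta (p := p), stabilizer_prodMk, hg, inf_comm, hZ]

theorem SubMulAction.stabilizer_eq_bot_of_fst_mem_setYH {H : Subgroup G}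
    (hZH : ∀ (z : Z) (g : G), stabilizer G z ⊓ conjSubgroup g H = ⊥) {M : SubMulAction G (Y × Z)}
    {x : M} (hx : (x : Y × Z).1 ∈ setYH G H) : stabilizer G x = ⊥ :=
  (stabilizer_of_subMul x).trans (_root_.stabilizer_eq_bot_of_fst_mem_setYH hZH hx)

end Stabilizers

section Measurability

variable {G Y : Type*} [Group G] [Countable G] [TopologicalSpace Y] [T2Space Y] [MeasurableSpace Y]
  [OpensMeasurableSpace Y] [MulAction G Y] [ContinuousConstSMul G Y]

theorem measurableSet_setOf_stabilizer_eq (K : Subgroup G) :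
    MeasurableSet {y : Y | stabilizer G y = K} := by
  have hK : {y : Y | stabilizer G y = K} = ⋂ g : G, {y | g • y = y ↔ g ∈ K} := by
    ext y
    simp [SetLike.ext_iff, mem_stabilizer_iff]
  have hfix : ∀ g : G, MeasurableSet {y : Y | g • y = y} :=
    fun g => (isClosed_eq (continuous_const_smul g) continuous_id).measurableSet
  rw [hK]
  refine .iInter fun g => ?_
  by_cases hg : g ∈ K
  · simpa only [hg, iff_true] using hfix g
  · simp only [hg, iff_false]
    exact (hfix g).compl

theorem measurableSet_setYH (H : Subgroup G) : MeasurableSet (setYH G H : Set Y) := by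
  have hH : setYH G H = ⋃ g : G, {y : Y | stabilizer G y = conjSubgroup g H} := by
    ext
    simp [setYH]
  rw [hH]
  exact .iUnion fun g => measurableSet_setOf_stabilizer_eq _

end Measurability

theorem finite_and_natCard_fiber_le {Y Z : Type*} [Finite Z] (M : Set (Y × Z)) (y : Y) :
    ((fun x : M => (x : Y × Z).1) ⁻¹' {y}).Finite ∧
      Nat.card ((fun x : M => (x : Y × Z).1) ⁻¹' {y}) ≤ Nat.card Z := by
  have hinj : Function.Injective fun x : (fun x : M => (x : Y × Z).1) ⁻¹' {y} => (x : Y × Z).2 := by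
    rintro ⟨⟨⟨y₁, z₁⟩, h₁⟩, hy₁⟩ ⟨⟨⟨y₂, z₂⟩, h₂⟩, hy₂⟩ (rfl : z₁ = z₂)
    obtain rfl : y₁ = y₂ := (hy₁ : y₁ = y).trans (hy₂ : y₂ = y).symm
    rfl
  exact ⟨Set.finite_coe_iff.1 (Finite.of_injective _ hinj), Nat.card_le_card_of_injective _ hinj⟩

theorem SubMulAction.exists_smulInvariant_lift_ae_stabilizer_eq_bot {G Y Z : Type*} [Group G]
    [Countable G] [TopologicalSpace Y] [T2Space Y] [MeasurableSpace Y] [BorelSpace Y]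
    [MulAction G Y] [ContinuousConstSMul G Y] [TopologicalSpace Z] [DiscreteTopology Z]
    [MeasurableSpace Z] [BorelSpace Z] [Fintype Z] [MulAction G Z] {H : Subgroup G}
    (hZH : ∀ (z : Z) (g : G), stabilizer G z ⊓ conjSubgroup g H = ⊥)
    (M : SubMulAction G (Y × Z)) (hMc : IsClosed (M : Set (Y × Z)))
    (hsurj : Function.Surjective fun x : M => (x : Y × Z).1) (μ : Measure Y)
    [IsProbabilityMeasure μ] [SMulInvariantMeasure G Y μ] (hμ : μ (setYH G H) = 1) :
    ∃ ν : Measure M, IsProbabilityMeasure ν ∧ SMulInvariantMeasure G M ν ∧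
      ν.map (fun x : M => (x : Y × Z).1) = μ ∧ ν {x : M | stabilizer G x = ⊥} = 1 := by
  have : ContinuousConstSMul G Z := ⟨fun _ => continuous_of_discreteTopology⟩
  have hfiber (y : Y) : ∃ z, (y, z) ∈ M := by
    obtain ⟨⟨⟨_, z⟩, hz⟩, rfl⟩ := hsurj y
    exact ⟨z, hz⟩
  obtain ⟨ν, hν, hνμ⟩ := M.exists_smulInvariantMeasure_map_eq μ hMc.measurableSet hfiber
  have hπ : Measurable fun x : M => (x : Y × Z).1 :=
    (continuous_fst.comp continuous_subtype_val).measurable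
  have : IsProbabilityMeasure (ν.map fun x : M => (x : Y × Z).1) := hνμ ▸ ‹_›
  have : IsProbabilityMeasure ν := Measure.isProbabilityMeasure_of_map fun x : M => (x : Y × Z).1
  refine ⟨ν, this, hν, hνμ, le_antisymm prob_le_one ?_⟩
  calc 1 = ν ((fun x : M => (x : Y × Z).1) ⁻¹' setYH G H) := by
        rw [← hμ, ← hνμ, Measure.map_apply hπ (measurableSet_setYH H)]
    _ ≤ _ := measure_mono fun x hx => M.stabilizer_eq_bot_of_fst_mem_setYH hZH hx

theorem stmt17_general {G : Type*} {Y : Type u} [Group G] [Countable G]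
    [TopologicalSpace Y] [CompactSpace Y] [T2Space Y]
    [MeasurableSpace Y] [BorelSpace Y]
    [MulAction G Y] [ContinuousConstSMul G Y]
    (H : Subgroup G) (hfin : (H : Set G).Finite)
    (hres : H ⊓ residualSubgroup G = ⊥)
    (hne : (setYH G H : Set Y).Nonempty) :
    ∃ (X : Type u) (_ : TopologicalSpace X) (_ : MeasurableSpace X) (_ : MulAction G X),
      CompactSpace X ∧ T2Space X ∧ BorelSpace X ∧ ContinuousConstSMul G X ∧
      ∃ (π : X → Y) (m : ℕ),
        1 ≤ m ∧
        Continuous π ∧ Function.Surjective π ∧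
        (∀ (g : G) (x : X), π (g • x) = g • π x) ∧
        π ⁻¹' (setYH G H : Set Y) ⊆ {x : X | MulAction.stabilizer G x = ⊥} ∧
        (∀ y ∈ (setYH G H : Set Y), (π ⁻¹' {y}).Finite ∧ Nat.card (π ⁻¹' {y}) ≤ m) ∧
        ((∀ y : Y, Dense (MulAction.orbit G y)) →
          (∀ x : X, Dense (MulAction.orbit G x)) ∧
          {x : X | MulAction.stabilizer G x = ⊥} ∈ residual X) ∧
        (∀ μ : Measure Y, IsProbabilityMeasure μ →
          (∀ (g : G) (A : Set Y), μ (g • A) = μ A) →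
          (∀ A : Set Y, MeasurableSet A → (∀ g : G, g • A = A) → μ A = 0 ∨ μ A = 1) →
          μ (setYH G H : Set Y) = 1 →
          ∃ ν : Measure X, IsProbabilityMeasure ν ∧
            (∀ (g : G) (A : Set X), ν (g • A) = ν A) ∧
            Measure.map π ν = μ ∧
            ν {x : X | MulAction.stabilizer G x = ⊥} = 1) := by
  obtain ⟨N, hN, hNfin, hNH⟩ := exists_normal_finiteIndex_inf_eq_bot hfin hres
  obtain ⟨Z, _, _, _, hZ⟩ := exists_finite_mulAction_stabilizer_eq.{u} N
  have hZH (z : Z) (g : G) : stabilizer G z ⊓ conjSubgroup g H = ⊥ :=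
    hZ z ▸ hN.inf_conjSubgroup_eq_bot hNH g
  let : TopologicalSpace Z := ⊥
  have : DiscreteTopology Z := ⟨rfl⟩
  let : MeasurableSpace Z := borel Z
  have : BorelSpace Z := ⟨rfl⟩
  have : ContinuousConstSMul G Z := ⟨fun _ => continuous_of_discreteTopology⟩
  have : Fintype Z := Fintype.ofFinite Z
  obtain ⟨M, hMc, hsurj, hMmin⟩ := exists_isClosed_subMulAction_surjective (G := G)
    continuous_fst Prod.fst_surjective (fun _ (_ : Y × Z) => rfl)
  have : CompactSpace M := isCompact_iff_compactSpace.1 hMc.isCompact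
  refine ⟨M, inferInstance, inferInstance, inferInstance, inferInstance, inferInstance,
    inferInstance, inferInstance, fun x => (x : Y × Z).1, Nat.card Z, Nat.card_pos,
    continuous_fst.comp continuous_subtype_val, hsurj, fun _ _ => rfl,
    fun x => M.stabilizer_eq_bot_of_fst_mem_setYH hZH, fun y _ => finite_and_natCard_fiber_le _ y,
    fun hmin => ?_, fun μ hμ hμinv _ hμYH => ?_⟩
  · have := hMmin ⟨hmin⟩
    obtain ⟨y, hy⟩ := hne
    obtain ⟨x, rfl⟩ := hsurj y
    exact ⟨dense_orbit G, residual_stabilizer_eq_bot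
      (M.stabilizer_eq_bot_of_fst_mem_setYH hZH hy) (dense_orbit G x)⟩
  · have : SMulInvariantMeasure G Y μ := ⟨fun g s _ => by rw [Set.preimage_smul, hμinv]⟩
    obtain ⟨ν, hνprob, hν, hνμ, hνfree⟩ :=
      M.exists_smulInvariant_lift_ae_stabilizer_eq_bot hZH hMc hsurj μ hμYH
    exact ⟨ν, hνprob, measure_smul ν, hνμ, hνfree⟩

/-- Suppose `H` is a finite almost normal subgroup of a countable group `G` with
`H ∩ R(G) = {1}`, and `(Y,G)` is a dynamical system with `Y_H ≠ ∅`. Then there are a dynamical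
system `(X,G)`, a factor map `π : X → Y` and `m ≥ 1` with `π⁻¹(Y_H) ⊆ {x : G_x = {1}}` and
`|π⁻¹{y}| ≤ m` for all `y ∈ Y_H`. Moreover (1) if `(Y,G)` is minimal then `(X,G)` is minimal and
topologically free, and (2) if `μ` is an ergodic invariant Borel probability measure on `Y` with
`μ(Y_H) = 1`, then some lift of `μ` to `X` makes `(X,G)` essentially free. -/
theorem stmt17 {G : Type*} {Y : Type u} [Group G] [Countable G]
    [TopologicalSpace Y] [CompactSpace Y] [T2Space Y]
    [MeasurableSpace Y] [BorelSpace Y]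
    [MulAction G Y] [ContinuousConstSMul G Y]
    (H : Subgroup G) (hfin : (H : Set G).Finite) (hAN : (Subgroup.normalizer (H : Set G)).FiniteIndex)
    (hres : H ⊓ residualSubgroup G = ⊥)
    (hne : (setYH G H : Set Y).Nonempty) :
    ∃ (X : Type u) (_ : TopologicalSpace X) (_ : MeasurableSpace X) (_ : MulAction G X),
      CompactSpace X ∧ T2Space X ∧ BorelSpace X ∧ ContinuousConstSMul G X ∧
      ∃ (π : X → Y) (m : ℕ),
        1 ≤ m ∧
        Continuous π ∧ Function.Surjective π ∧
        (∀ (g : G) (x : X), π (g • x) = g • π x) ∧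
        π ⁻¹' (setYH G H : Set Y) ⊆ {x : X | MulAction.stabilizer G x = ⊥} ∧
        (∀ y ∈ (setYH G H : Set Y), (π ⁻¹' {y}).Finite ∧ Nat.card (π ⁻¹' {y}) ≤ m) ∧
        ((∀ y : Y, Dense (MulAction.orbit G y)) →
          (∀ x : X, Dense (MulAction.orbit G x)) ∧
          {x : X | MulAction.stabilizer G x = ⊥} ∈ residual X) ∧
        (∀ μ : Measure Y, IsProbabilityMeasure μ →
          (∀ (g : G) (A : Set Y), μ (g • A) = μ A) →
          (∀ A : Set Y, MeasurableSet A → (∀ g : G, g • A = A) → μ A = 0 ∨ μ A = 1) →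
          μ (setYH G H : Set Y) = 1 →
          ∃ ν : Measure X, IsProbabilityMeasure ν ∧
            (∀ (g : G) (A : Set X), ν (g • A) = ν A) ∧
            Measure.map π ν = μ ∧
            ν {x : X | MulAction.stabilizer G x = ⊥} = 1) :=
  stmt17_general H hfin hres hne
end

section
/- Let G be a group and H a finite almost normal subgroup of G whose center is trivial. Then the centralizer Z_H = {g ∈ G : gh = hg for all h ∈ H} has finite index in G, and H ∩ R(G) = {1}, where R(G) is the intersection of all finite-index subgroups of G. -/
namespace Subgroup

variable {G : Type*} [Group G]

theorem finiteIndex_centralizer_of_finite {H : Subgroup G} [Finite H]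
    [(normalizer (H : Set G)).FiniteIndex] : (centralizer (H : Set G)).FiniteIndex := by
  have hker : ((centralizer (H : Set G)).subgroupOf (normalizer (H : Set G))).FiniteIndex :=
    H.normalizerMonoidHom_ker ▸ finiteIndex_ker _
  rw [finiteIndex_iff, ← relIndex_mul_index (centralizer_le_normalizer _)]
  exact mul_ne_zero hker.index_ne_zero FiniteIndex.index_ne_zero

end Subgroup

theorem residualSubgroup_le {G : Type*} [Group G] (K : Subgroup G) [K.FiniteIndex] :
    residualSubgroup G ≤ K :=
  iInf₂_le K ‹_›

/-- Let `H` be a finite almost normal subgroup of `G` with trivial center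
(`C_H = Z_H ∩ H = {1}`, where `Z_H` is the centralizer of `H` in `G`). Then `Z_H` has finite
index in `G` and `H ∩ R(G) = {1}`. -/
theorem stmt18 {G : Type*} [Group G]
    (H : Subgroup G) (hfin : (H : Set G).Finite) (hAN : (Subgroup.normalizer (H : Set G)).FiniteIndex)
    (hcenter : Subgroup.centralizer (H : Set G) ⊓ H = ⊥) :
    (Subgroup.centralizer (H : Set G)).FiniteIndex ∧
    H ⊓ residualSubgroup G = ⊥ := by
  have : Finite H := hfin.to_subtype
  have hZ := Subgroup.finiteIndex_centralizer_of_finite (H := H)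
  refine ⟨hZ, eq_bot_iff.mpr ?_⟩
  rw [← hcenter, inf_comm]
  exact inf_le_inf_right H (residualSubgroup_le (Subgroup.centralizer (H : Set G)))
end
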